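/- Let K be a finite index set, C > 0, d : K → ℂ with Re d_k ≥ 0, Im d_k ≥ 0 and |d_k| ≤ C for every k ∈ K, and v : K → ℝ with v_k > 0 for every k. Define OPT₁ as the maximum of Σ_{k∈S₁} v_k over all S₁ ⊆ K with Re(Σ_{k∈S₁} d_k) + Im(Σ_{k∈S₁} d_k) ≤ C, and define V₂ as the maximum of v_k over all k ∈ K with Re d_k + Im d_k > C (with V₂ = 0 if no such k exists). Let ρ be a real with 0 < ρ ≤ 1, and let A ⊆ K satisfy Re(Σ_{k∈A} d_k) + Im(Σ_{k∈A} d_k) ≤ C and Σ_{k∈A} v_k ≥ ρ · OPT₁. Then for every S ⊆ K with |Σ_{k∈S} d_k| ≤ C, one has max(Σ_{k∈A} v_k, V₂) ≥ (ρ/2) · Σ_{k∈S} v_k. -/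

import Mathlib

/-!
With `w k = Re d_k + Im d_k`, a set `T` lies in the triangle `D₁` iff `w(T) ≤ C`, and a C-KP
feasible set `S` has `w(S) ≤ √2 C ≤ 3C/2`. If `S` contains an item with `w k > C` (an item of
`D₂`), the rest of `S` has weight below `C/2`, so `v(S) ≤ V₂ + OPT₁`. Otherwise every item has
weight at most `C`, and a total weight of at most `3C/2` can be cut into two parts of weight at
most `C` each, so `v(S) ≤ 2 OPT₁`. In both cases `v(S) ≤ 2 max(OPT₁, V₂)`, and `A` recovers a
`ρ`-fraction of that maximum.
-/

open Finset

theorem Complex.re_add_im_le_sqrt_two_mul_norm (z : ℂ) : z.re + z.im ≤ √2 * ‖z‖ := by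
  rw [Complex.norm_def, ← Real.sqrt_mul zero_le_two, Complex.normSq_apply]
  exact (le_abs_self _).trans <| Real.abs_le_sqrt <| by nlinarith [sq_nonneg (z.re - z.im)]

theorem Complex.re_add_im_le_of_norm_le {z : ℂ} {C : ℝ} (hz : ‖z‖ ≤ C) :
    z.re + z.im ≤ 3 / 2 * C := by
  have hsqrt : √2 ≤ 3 / 2 := Real.sqrt_le_iff.mpr ⟨by norm_num, by norm_num⟩
  calc z.re + z.im ≤ √2 * ‖z‖ := z.re_add_im_le_sqrt_two_mul_norm
    _ ≤ 3 / 2 * ‖z‖ := mul_le_mul_of_nonneg_right hsqrt (norm_nonneg z)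
    _ ≤ 3 / 2 * C := by linarith

theorem bddAbove_setOf_exists_and_eq {α β : Type*} [Finite α] [Preorder β] [IsDirectedOrder β]
    [Nonempty β] (f : α → β) (p : α → Prop) : BddAbove {x | ∃ a, p a ∧ x = f a} := by
  refine ((Set.finite_range f).subset ?_).bddAbove
  rintro x ⟨a, -, rfl⟩
  exact ⟨a, rfl⟩

section Partition

variable {ι : Type*} [DecidableEq ι] {w v : ι → ℝ} {S : Finset ι} {C : ℝ}

theorem exists_subset_sum_le_and_sdiff_sum_le (hw : ∀ k ∈ S, 0 ≤ w k)
    (hsmall : ∀ k ∈ S, w k ≤ C) (hS : ∑ k ∈ S, w k ≤ 3 / 2 * C) :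
    ∃ P ⊆ S, ∑ k ∈ P, w k ≤ C ∧ ∑ k ∈ S \ P, w k ≤ C := by
  have hC : 0 ≤ C := by linarith [sum_nonneg hw]
  set F := S.powerset.filter fun P => ∑ k ∈ P, w k ≤ C
  have hF : (∅ : Finset ι) ∈ F := by simp [F, hC]
  -- Maximising the cardinality rather than the weight blocks every remaining item,
  -- including items of weight zero.
  obtain ⟨P, hPF, hPmax⟩ := F.exists_max_image card ⟨∅, hF⟩
  obtain ⟨hPS, hP⟩ : P ⊆ S ∧ ∑ k ∈ P, w k ≤ C := by simpa [F] using hPF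
  refine ⟨P, hPS, hP, ?_⟩
  have hblocked : ∀ j ∈ S \ P, C < ∑ k ∈ P, w k + w j := by
    intro j hj
    obtain ⟨hjS, hjP⟩ := mem_sdiff.mp hj
    by_contra! hle
    have hins : insert j P ∈ F := by
      simpa [F, insert_subset_iff, hjS, hPS, sum_insert hjP, add_comm] using hle
    have := hPmax _ hins
    rw [card_insert_of_notMem hjP] at this
    omega
  have hsplit := sum_sdiff hPS (f := w)
  by_contra! hlarge
  have hcard : 1 < (S \ P).card := by
    by_contra! hcard
    have := sum_le_card_nsmul (S \ P) w C fun j hj => hsmall j (mem_sdiff.mp hj).1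
    rw [nsmul_eq_mul] at this
    nlinarith [show ((S \ P).card : ℝ) ≤ 1 by exact_mod_cast hcard]
  obtain ⟨j₁, hj₁, j₂, hj₂, hne⟩ := one_lt_card.mp hcard
  have hpair : w j₁ + w j₂ ≤ ∑ k ∈ S \ P, w k := by
    rw [← sum_pair hne]
    refine sum_le_sum_of_subset_of_nonneg ?_ fun k hk _ => hw k (mem_sdiff.mp hk).1
    simp [insert_subset_iff, hj₁, hj₂]
  -- The two blocking inequalities together with `C < w(S \ P)` give `3C < 2 w(S)`.
  linarith [hblocked j₁ hj₁, hblocked j₂ hj₂]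

theorem sum_le_two_mul_max_of_sum_le (hw : ∀ k ∈ S, 0 ≤ w k) (hS : ∑ k ∈ S, w k ≤ 3 / 2 * C)
    {OPT V : ℝ} (hOPT : ∀ T ⊆ S, ∑ k ∈ T, w k ≤ C → ∑ k ∈ T, v k ≤ OPT)
    (hV : ∀ k ∈ S, C < w k → v k ≤ V) : ∑ k ∈ S, v k ≤ 2 * max OPT V := by
  by_cases hbig : ∃ k ∈ S, C < w k
  · obtain ⟨k, hkS, hk⟩ := hbig
    have hrest : ∑ j ∈ S.erase k, w j ≤ C := by
      linarith [add_sum_erase S w hkS,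
        sum_nonneg fun j (hj : j ∈ S.erase k) => hw j (mem_of_mem_erase hj)]
    linarith [add_sum_erase S v hkS, hOPT _ (erase_subset k S) hrest, hV k hkS hk,
      le_max_left OPT V, le_max_right OPT V]
  · push Not at hbig
    obtain ⟨P, hPS, hP, hQ⟩ := exists_subset_sum_le_and_sdiff_sum_le hw hbig hS
    linarith [sum_sdiff hPS (f := v), hOPT P hPS hP, hOPT _ sdiff_subset hQ, le_max_left OPT V]

end Partition

theorem ckp_half_rho_approx_general {K : Type*} [Fintype K] (C : ℝ)
    (d : K → ℂ) (hre : ∀ k, 0 ≤ (d k).re) (him : ∀ k, 0 ≤ (d k).im)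
    (v : K → ℝ)
    (OPT₁ V₂ : ℝ)
    (hOPT₁ : OPT₁ = sSup {x : ℝ | ∃ S₁ : Finset K,
      (∑ k ∈ S₁, d k).re + (∑ k ∈ S₁, d k).im ≤ C ∧ x = ∑ k ∈ S₁, v k})
    (hV₂ : V₂ = sSup (insert 0 {x : ℝ | ∃ k : K, C < (d k).re + (d k).im ∧ x = v k}))
    (ρ : ℝ) (hρ0 : 0 < ρ) (hρ1 : ρ ≤ 1)
    (A : Finset K)
    (hA_apx : ρ * OPT₁ ≤ ∑ k ∈ A, v k)
    (S : Finset K) (hS : ‖∑ k ∈ S, d k‖ ≤ C) :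
    (ρ / 2) * ∑ k ∈ S, v k ≤ max (∑ k ∈ A, v k) V₂ := by
  classical
  set w : K → ℝ := fun k => (d k).re + (d k).im
  have hw_sum (T : Finset K) : ∑ k ∈ T, w k = (∑ k ∈ T, d k).re + (∑ k ∈ T, d k).im := by
    simp only [w, sum_add_distrib, Complex.re_sum, Complex.im_sum]
  have hOPT (T : Finset K) (_ : T ⊆ S) (hT : ∑ k ∈ T, w k ≤ C) : ∑ k ∈ T, v k ≤ OPT₁ :=
    hOPT₁ ▸ le_csSup (bddAbove_setOf_exists_and_eq _ _) ⟨T, hw_sum T ▸ hT, rfl⟩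
  have hV₂_bdd := (bddAbove_setOf_exists_and_eq v fun k => C < w k).insert 0
  have hV (k : K) (_ : k ∈ S) (hk : C < w k) : v k ≤ V₂ :=
    hV₂ ▸ le_csSup hV₂_bdd (Set.mem_insert_of_mem _ ⟨k, hk, rfl⟩)
  have hV₂_nonneg : 0 ≤ V₂ := hV₂ ▸ le_csSup hV₂_bdd (Set.mem_insert 0 _)
  have hkey : ∑ k ∈ S, v k ≤ 2 * max OPT₁ V₂ :=
    sum_le_two_mul_max_of_sum_le (fun k _ => add_nonneg (hre k) (him k))
      (hw_sum S ▸ Complex.re_add_im_le_of_norm_le hS) hOPT hV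
  calc ρ / 2 * ∑ k ∈ S, v k ≤ ρ / 2 * (2 * max OPT₁ V₂) := by gcongr
    _ = max (ρ * OPT₁) (ρ * V₂) := by rw [← mul_max_of_nonneg _ _ hρ0.le]; ring
    _ ≤ max (∑ k ∈ A, v k) V₂ := max_le_max hA_apx (mul_le_of_le_one_left hV₂_nonneg hρ1)

/-- Combinatorial content of Theorem 2: if `A` is a `ρ`-approximate solution
for the subproblem with feasible region `D₁`, then the better of `A` and the
best single item in `D₂` is a `(ρ/2)`-approximation for C-KP. -/
theorem ckp_half_rho_approx {K : Type*} [Fintype K] (C : ℝ) (hC : 0 < C)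
    (d : K → ℂ) (hre : ∀ k, 0 ≤ (d k).re) (him : ∀ k, 0 ≤ (d k).im)
    (hmag : ∀ k, ‖d k‖ ≤ C)
    (v : K → ℝ) (hv : ∀ k, 0 < v k)
    (OPT₁ V₂ : ℝ)
    (hOPT₁ : OPT₁ = sSup {x : ℝ | ∃ S₁ : Finset K,
      (∑ k ∈ S₁, d k).re + (∑ k ∈ S₁, d k).im ≤ C ∧ x = ∑ k ∈ S₁, v k})
    (hV₂ : V₂ = sSup (insert 0 {x : ℝ | ∃ k : K, C < (d k).re + (d k).im ∧ x = v k}))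
    (ρ : ℝ) (hρ0 : 0 < ρ) (hρ1 : ρ ≤ 1)
    (A : Finset K)
    (hA_feas : (∑ k ∈ A, d k).re + (∑ k ∈ A, d k).im ≤ C)
    (hA_apx : ρ * OPT₁ ≤ ∑ k ∈ A, v k)
    (S : Finset K) (hS : ‖∑ k ∈ S, d k‖ ≤ C) :
    (ρ / 2) * ∑ k ∈ S, v k ≤ max (∑ k ∈ A, v k) V₂ :=
  ckp_half_rho_approx_general C d hre him v OPT₁ V₂ hOPT₁ hV₂ ρ hρ0 hρ1 A hA_apx S hS
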